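/- In the dengue model with control c(t) ∈ [0,1], if initially 0 ≤ s_h(0), e_h(0), i_h(0), r_h(0) and s_h(0)+e_h(0)+i_h(0)+r_h(0) = 1, and 0 ≤ a_m(0), s_m(0), e_m(0), i_m(0) ≤ 1, then the set Ω = {(s_h,e_h,i_h,r_h,a_m,s_m,e_m,i_m) : all components ≥ 0, human components sum to 1} is positively invariant: any solution of the system starting in Ω remains in Ω for all t ≥ 0. -/

import Mathlib

/-!
Nonnegativity comes from quasi-positivity of the vector field: whenever a component is `≤ 0`, its
velocity is at least `-K` times the total negative mass `∑ j, (x j)⁻`, where `K` depends only on a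
bound for the solution on the time interval considered. Hence `V = ∑ i, (x i)⁻ ^ 2`, which is
differentiable with `V' = -2 ∑ i, (x i)⁻ * x' i`, satisfies `V' ≤ C V` there, and `V 0 = 0` forces
`V = 0` by Gronwall. The human total `N` obeys the closed equation `N' = μ_h (1 - N)` with
`N 0 = 1`, so `N = 1`.
-/

open Set Finset Filter Asymptotics

lemma abs_negPart_sq_sub_le (x y : ℝ) :
    |y⁻ ^ 2 - x⁻ ^ 2 + 2 * x⁻ * (y - x)| ≤ (y - x) ^ 2 := by
  rcases le_total x 0 with hx | hx <;> rcases le_total y 0 with hy | hy <;>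
    simp only [negPart_of_nonpos, negPart_of_nonneg, hx, hy] <;>
    rw [abs_le] <;> constructor <;> nlinarith

lemma hasDerivAt_negPart_sq (x : ℝ) : HasDerivAt (fun y : ℝ => y⁻ ^ 2) (-(2 * x⁻)) x := by
  rw [hasDerivAt_iff_isLittleO]
  refine IsBigO.trans_isLittleO (g := fun y => ‖y - x‖ ^ 2) ?_ (isLittleO_pow_sub_sub x one_lt_two)
  refine IsBigO.of_bound 1 (Eventually.of_forall fun y => ?_)
  simpa [one_mul, Real.norm_eq_abs, sq_abs, smul_eq_mul, mul_comm] using abs_negPart_sq_sub_le x y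

lemma nonpos_of_hasDerivAt_le_mul {V V' : ℝ → ℝ} {K a b : ℝ}
    (hV : ∀ t ∈ Icc a b, HasDerivAt V (V' t) t) (hle : ∀ t ∈ Icc a b, V' t ≤ K * V t)
    (ha : V a ≤ 0) : ∀ t ∈ Icc a b, V t ≤ 0 := by
  have hW : ∀ t ∈ Icc a b,
      HasDerivAt (fun s => Real.exp (-K * s) * V s) (Real.exp (-K * t) * (V' t - K * V t)) t := by
    intro t ht
    refine ((((hasDerivAt_id t).const_mul (-K)).exp).mul (hV t ht)).congr_deriv ?_
    simp only [id]; ring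
  have hanti : AntitoneOn (fun s => Real.exp (-K * s) * V s) (Icc a b) := by
    refine antitoneOn_of_hasDerivWithinAt_nonpos (convex_Icc a b)
      (fun t ht => (hW t ht).continuousAt.continuousWithinAt)
      (fun t ht => (hW t (interior_subset ht)).hasDerivWithinAt) fun t ht => ?_
    exact mul_nonpos_of_nonneg_of_nonpos (Real.exp_pos _).le
      (sub_nonpos.2 (hle t (interior_subset ht)))
  intro t ht
  have h := hanti (left_mem_Icc.2 (ht.1.trans ht.2)) ht ht.1
  exact nonpos_of_mul_nonpos_right (h.trans (mul_nonpos_of_nonneg_of_nonpos (Real.exp_pos _).le ha))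
    (Real.exp_pos _)

lemma eq_of_hasDerivAt_eq_mul_sub {N : ℝ → ℝ} {μ c a b : ℝ}
    (hN : ∀ t ∈ Icc a b, HasDerivAt N (μ * (c - N t)) t) (ha : N a = c) :
    ∀ t ∈ Icc a b, N t = c := by
  have hV := nonpos_of_hasDerivAt_le_mul (V := fun t => (N t - c) ^ 2) (K := -2 * μ)
    (fun t ht => ((hN t ht).sub_const c).pow 2 |>.congr_deriv (by ring)) (fun t _ => le_rfl)
    (by simp [ha])
  intro t ht
  exact sub_eq_zero.1 (pow_eq_zero_iff two_ne_zero |>.1 (le_antisymm (hV t ht) (sq_nonneg _)))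

theorem nonneg_of_hasDerivAt_of_quasipositive {ι : Type*} [Fintype ι] {x x' : ι → ℝ → ℝ}
    {K a b : ℝ} (hx : ∀ i, ∀ t ∈ Icc a b, HasDerivAt (x i) (x' i t) t)
    (hK : ∀ i, ∀ t ∈ Icc a b, x i t ≤ 0 → -(K * ∑ j, (x j t)⁻) ≤ x' i t)
    (ha : ∀ i, 0 ≤ x i a) : ∀ i, ∀ t ∈ Icc a b, 0 ≤ x i t := by
  have hV : ∀ t ∈ Icc a b, HasDerivAt (fun s => ∑ i, (x i s)⁻ ^ 2)
      (∑ i, -(2 * (x i t)⁻) * x' i t) t := fun t ht =>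
    HasDerivAt.fun_sum fun i _ => (hasDerivAt_negPart_sq (x i t)).comp t (hx i t ht)
  have hterm : ∀ i, ∀ t ∈ Icc a b,
      -(2 * (x i t)⁻) * x' i t ≤ 2 * K * ((x i t)⁻ * ∑ j, (x j t)⁻) := by
    intro i t ht
    rcases le_or_gt (x i t) 0 with hi | hi
    · nlinarith [hK i t ht hi, negPart_nonneg (x i t)]
    · simp [negPart_of_nonneg hi.le]
  have hle : ∀ t ∈ Icc a b, ∑ i, -(2 * (x i t)⁻) * x' i t ≤
      (2 * |K| * Fintype.card ι) * ∑ i, (x i t)⁻ ^ 2 := by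
    intro t ht
    calc ∑ i, -(2 * (x i t)⁻) * x' i t
        ≤ ∑ i, 2 * K * ((x i t)⁻ * ∑ j, (x j t)⁻) := sum_le_sum fun i _ => hterm i t ht
      _ = 2 * K * (∑ j, (x j t)⁻) ^ 2 := by rw [← mul_sum, ← sum_mul, sq]
      _ ≤ 2 * |K| * (Fintype.card ι * ∑ i, (x i t)⁻ ^ 2) := by
        gcongr
        · exact le_abs_self K
        · exact sq_sum_le_card_mul_sum_sq
      _ = _ := by ring
  have hV0 := nonpos_of_hasDerivAt_le_mul hV hle (by simp [negPart_of_nonneg (ha _)])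
  intro i t ht
  have hi : (x i t)⁻ ^ 2 ≤ 0 :=
    (single_le_sum (fun j _ => sq_nonneg (x j t)⁻) (mem_univ i)).trans (hV0 t ht)
  exact negPart_eq_zero.1 (pow_eq_zero_iff two_ne_zero |>.1 (le_antisymm hi (sq_nonneg _)))

lemma exists_abs_le_of_continuousOn {ι : Type*} [Fintype ι] {x : ι → ℝ → ℝ} {s : Set ℝ}
    (hs : IsCompact s) (hx : ∀ i, ContinuousOn (x i) s) : ∃ M, ∀ i, ∀ t ∈ s, |x i t| ≤ M := by
  obtain ⟨M, hM⟩ := hs.exists_bound_of_continuousOn (continuousOn_pi.2 hx)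
  exact ⟨M, fun i t ht => (norm_le_pi_norm (fun j => x j t) i).trans (hM t ht)⟩

lemma mul_le_mul_negPart_of_nonpos {x y M : ℝ} (hx : x ≤ 0) (hy : -M ≤ y) : y * x ≤ M * x⁻ := by
  rw [negPart_of_nonpos hx]; nlinarith

lemma neg_mul_le_mul_of_neg_le {w W s σ : ℝ} (hw : 0 ≤ w) (hwW : w ≤ W) (hs : -σ ≤ s) (hσ : 0 ≤ σ) :
    -(W * σ) ≤ w * s := by nlinarith

lemma neg_mul_add_negPart_le_mul {y z M : ℝ} (hy : |y| ≤ M) (hz : |z| ≤ M) :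
    -(M * (y⁻ + z⁻)) ≤ y * z := by
  rw [abs_le] at hy hz
  rcases le_total y 0 with h | h <;> rcases le_total z 0 with h' | h' <;>
    simp only [negPart_of_nonpos, negPart_of_nonneg, h, h'] <;> nlinarith

lemma neg_mul_le_of_neg_mul_le {a y K S f : ℝ} (ha : 0 ≤ a) (haK : a ≤ K) (hy : 0 ≤ y)
    (hyS : y ≤ S) (h : -(a * y) ≤ f) : -(K * S) ≤ f :=
  (neg_le_neg (mul_le_mul haK hyS hy (ha.trans haK))).trans h

section Dengue
variable (B βmh βhm m k μh νh ηh φ ηA μA μm ηm : ℝ)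

/-- The state `(s_h, e_h, i_h, r_h, a_m, s_m, e_m, i_m)` is `(x 0, …, x 7)`. -/
noncomputable def dengueField (c : ℝ) (x : Fin 8 → ℝ) : Fin 8 → ℝ :=
  ![μh - (B * βmh * m * x 7 + μh) * x 0,
    B * βmh * m * x 7 * x 0 - (νh + μh) * x 1,
    νh * x 1 - (ηh + μh) * x 2,
    ηh * x 2 - μh * x 3,
    φ * (m / k) * (1 - x 4) * (x 5 + x 6 + x 7) - (ηA + μA) * x 4,
    ηA * (k / m) * x 4 - (B * βhm * x 2 + μm) * x 5 - c * x 5,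
    B * βhm * x 2 * x 5 - (μm + ηm) * x 6 - c * x 6,
    ηm * x 6 - μm * x 7 - c * x 7]

variable {B βmh βhm m k μh νh ηh φ ηA μA μm ηm} in
lemma dengueField_quasipositive (hB : 0 ≤ B) (hβmh : 0 ≤ βmh) (hβhm : 0 ≤ βhm) (hm : 0 ≤ m)
    (hk : 0 ≤ k) (hμh : 0 ≤ μh) (hνh : 0 ≤ νh) (hηh : 0 ≤ ηh) (hφ : 0 ≤ φ) (hηA : 0 ≤ ηA)
    (hμA : 0 ≤ μA) (hμm : 0 ≤ μm) (hηm : 0 ≤ ηm) (M : ℝ) :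
    ∃ K, ∀ c, 0 ≤ c → ∀ x : Fin 8 → ℝ, (∀ j, |x j| ≤ M) → ∀ i, x i ≤ 0 →
      -(K * ∑ j, (x j)⁻) ≤ dengueField B βmh βhm m k μh νh ηh φ ηA μA μm ηm c x i := by
  have hP : 0 ≤ B * βmh * m := by positivity
  have hQ : 0 ≤ φ * (m / k) := by positivity
  have hR : 0 ≤ ηA * (k / m) := by positivity
  have hβ : 0 ≤ B * βhm := by positivity
  set K := B * βmh * m * M + νh + ηh + φ * (m / k) * (1 + M) + ηA * (k / m) + B * βhm * M + ηm
    with hK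
  refine ⟨K, fun c hc x hx i hi => ?_⟩
  have hM : 0 ≤ M := (abs_nonneg _).trans (hx 0)
  have hPM : 0 ≤ B * βmh * m * M := by positivity
  have hQM : 0 ≤ φ * (m / k) * (1 + M) := by positivity
  have hβM : 0 ≤ B * βhm * M := by positivity
  have hlo : ∀ j, -M ≤ x j := fun j => (abs_le.1 (hx j)).1
  have hneg : ∀ j, -(x j)⁻ ≤ x j := fun j => neg_le.1 (neg_le_negPart _)
  have h0 := negPart_nonneg (x 0); have h1 := negPart_nonneg (x 1)
  have h2 := negPart_nonneg (x 2); have h3 := negPart_nonneg (x 3)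
  have h4 := negPart_nonneg (x 4); have h5 := negPart_nonneg (x 5)
  have h6 := negPart_nonneg (x 6); have h7 := negPart_nonneg (x 7)
  rw [Fin.sum_univ_eight]
  fin_cases i <;>
    simp only [Fin.zero_eta, Fin.mk_one, Fin.reduceFinMk, Fin.isValue, dengueField,
      Matrix.cons_val, Matrix.cons_val_zero, Matrix.cons_val_one] at hi ⊢
  · refine neg_mul_le_of_neg_mul_le (a := B * βmh * m * M) (y := (x 0)⁻) hPM (by linarith) h0
      (by linarith) ?_
    linarith [mul_le_mul_of_nonneg_left (mul_le_mul_negPart_of_nonpos hi (hlo 7)) hP,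
      mul_nonpos_of_nonneg_of_nonpos hμh hi]
  · refine neg_mul_le_of_neg_mul_le (a := B * βmh * m * M) (y := (x 7)⁻ + (x 0)⁻) hPM
      (by linarith) (by positivity) (by linarith) ?_
    linarith [mul_le_mul_of_nonneg_left (neg_mul_add_negPart_le_mul (hx 7) (hx 0)) hP,
      mul_nonpos_of_nonneg_of_nonpos (by positivity : 0 ≤ νh + μh) hi]
  · refine neg_mul_le_of_neg_mul_le (a := νh) (y := (x 1)⁻) hνh (by linarith) h1 (by linarith) ?_
    linarith [mul_le_mul_of_nonneg_left (hneg 1) hνh,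
      mul_nonpos_of_nonneg_of_nonpos (by positivity : 0 ≤ ηh + μh) hi]
  · refine neg_mul_le_of_neg_mul_le (a := ηh) (y := (x 2)⁻) hηh (by linarith) h2 (by linarith) ?_
    linarith [mul_le_mul_of_nonneg_left (hneg 2) hηh, mul_nonpos_of_nonneg_of_nonpos hμh hi]
  · refine neg_mul_le_of_neg_mul_le (a := φ * (m / k) * (1 + M)) (y := (x 5)⁻ + (x 6)⁻ + (x 7)⁻)
      hQM (by linarith) (by positivity) (by linarith) ?_
    have := neg_mul_le_mul_of_neg_le (w := 1 - x 4) (W := 1 + M) (s := x 5 + x 6 + x 7)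
      (by linarith) (by linarith [hlo 4]) (by linarith [hneg 5, hneg 6, hneg 7])
      (by positivity : 0 ≤ (x 5)⁻ + (x 6)⁻ + (x 7)⁻)
    linarith [mul_le_mul_of_nonneg_left this hQ,
      mul_nonpos_of_nonneg_of_nonpos (by positivity : 0 ≤ ηA + μA) hi]
  · refine neg_mul_le_of_neg_mul_le (a := ηA * (k / m) + B * βhm * M) (y := (x 4)⁻ + (x 5)⁻)
      (by positivity) (by linarith) (by positivity) (by linarith) ?_
    linarith [mul_le_mul_of_nonneg_left (hneg 4) hR,
      mul_le_mul_of_nonneg_left (mul_le_mul_negPart_of_nonpos hi (hlo 2)) hβ,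
      mul_nonpos_of_nonneg_of_nonpos hμm hi, mul_nonpos_of_nonneg_of_nonpos hc hi,
      mul_nonneg hR h5, mul_nonneg hβM h4]
  · refine neg_mul_le_of_neg_mul_le (a := B * βhm * M) (y := (x 2)⁻ + (x 5)⁻) hβM
      (by linarith) (by positivity) (by linarith) ?_
    linarith [mul_le_mul_of_nonneg_left (neg_mul_add_negPart_le_mul (hx 2) (hx 5)) hβ,
      mul_nonpos_of_nonneg_of_nonpos (by positivity : 0 ≤ μm + ηm) hi,
      mul_nonpos_of_nonneg_of_nonpos hc hi]
  · refine neg_mul_le_of_neg_mul_le (a := ηm) (y := (x 6)⁻) hηm (by linarith) h6 (by linarith) ?_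
    linarith [mul_le_mul_of_nonneg_left (hneg 6) hηm, mul_nonpos_of_nonneg_of_nonpos hμm hi,
      mul_nonpos_of_nonneg_of_nonpos hc hi]
end Dengue

theorem dengue_positively_invariant_general
    (B βmh βhm m k μh νh ηh φ ηA μA μm ηm : ℝ)
    (hB : 0 < B) (hβmh : 0 < βmh) (hβhm : 0 < βhm) (hm : 0 < m) (hk : 0 < k)
    (hμh : 0 < μh) (hνh : 0 < νh) (hηh : 0 < ηh) (hφ : 0 < φ)
    (hηA : 0 < ηA) (hμA : 0 < μA) (hμm : 0 < μm) (hηm : 0 < ηm)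
    (c : ℝ → ℝ) (hc : ∀ t, 0 ≤ t → c t ∈ Set.Icc (0:ℝ) 1)
    (sh eh ih rh am sm em im : ℝ → ℝ)
    (hsh : ∀ t, 0 ≤ t → HasDerivAt sh (μh - (B * βmh * m * im t + μh) * sh t) t)
    (heh : ∀ t, 0 ≤ t → HasDerivAt eh (B * βmh * m * im t * sh t - (νh + μh) * eh t) t)
    (hih : ∀ t, 0 ≤ t → HasDerivAt ih (νh * eh t - (ηh + μh) * ih t) t)
    (hrh : ∀ t, 0 ≤ t → HasDerivAt rh (ηh * ih t - μh * rh t) t)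
    (ham : ∀ t, 0 ≤ t → HasDerivAt am
      (φ * (m / k) * (1 - am t) * (sm t + em t + im t) - (ηA + μA) * am t) t)
    (hsm : ∀ t, 0 ≤ t → HasDerivAt sm
      (ηA * (k / m) * am t - (B * βhm * ih t + μm) * sm t - c t * sm t) t)
    (hem : ∀ t, 0 ≤ t → HasDerivAt em
      (B * βhm * ih t * sm t - (μm + ηm) * em t - c t * em t) t)
    (him : ∀ t, 0 ≤ t → HasDerivAt im (ηm * em t - μm * im t - c t * im t) t)
    (h0nonneg : 0 ≤ sh 0 ∧ 0 ≤ eh 0 ∧ 0 ≤ ih 0 ∧ 0 ≤ rh 0)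
    (h0sum : sh 0 + eh 0 + ih 0 + rh 0 = 1)
    (h0vec : am 0 ∈ Set.Icc (0:ℝ) 1 ∧ sm 0 ∈ Set.Icc (0:ℝ) 1 ∧
             em 0 ∈ Set.Icc (0:ℝ) 1 ∧ im 0 ∈ Set.Icc (0:ℝ) 1) :
    ∀ t, 0 ≤ t →
      (0 ≤ sh t ∧ 0 ≤ eh t ∧ 0 ≤ ih t ∧ 0 ≤ rh t ∧
       0 ≤ am t ∧ 0 ≤ sm t ∧ 0 ≤ em t ∧ 0 ≤ im t ∧
       sh t + eh t + ih t + rh t = 1) := by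
  intro T hT
  set x : Fin 8 → ℝ → ℝ := ![sh, eh, ih, rh, am, sm, em, im]
  have hx : ∀ i, ∀ t ∈ Icc 0 T, HasDerivAt (x i)
      (dengueField B βmh βhm m k μh νh ηh φ ηA μA μm ηm (c t) (fun j => x j t) i) t := by
    intro i t ht
    fin_cases i
    exacts [hsh t ht.1, heh t ht.1, hih t ht.1, hrh t ht.1, ham t ht.1, hsm t ht.1, hem t ht.1,
      him t ht.1]
  have hx0 : ∀ i, 0 ≤ x i 0 := by
    intro i
    fin_cases i
    exacts [h0nonneg.1, h0nonneg.2.1, h0nonneg.2.2.1, h0nonneg.2.2.2, h0vec.1.1, h0vec.2.1.1,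
      h0vec.2.2.1.1, h0vec.2.2.2.1]
  obtain ⟨M, hM⟩ := exists_abs_le_of_continuousOn isCompact_Icc
    fun i t ht => (hx i t ht).continuousAt.continuousWithinAt
  obtain ⟨K, hK⟩ := dengueField_quasipositive hB.le hβmh.le hβhm.le hm.le hk.le hμh.le hνh.le
    hηh.le hφ.le hηA.le hμA.le hμm.le hηm.le M
  have hnonneg := nonneg_of_hasDerivAt_of_quasipositive hx
    (fun i t ht => hK (c t) (hc t ht.1).1 _ (fun j => hM j t ht) i) hx0
  have hsum := eq_of_hasDerivAt_eq_mul_sub (b := T) (N := fun t => sh t + eh t + ih t + rh t)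
    (fun t ht => ((((hsh t ht.1).add (heh t ht.1)).add (hih t ht.1)).add (hrh t ht.1)).congr_deriv
      (by ring)) h0sum
  have hT' : T ∈ Icc 0 T := ⟨hT, le_rfl⟩
  exact ⟨hnonneg 0 T hT', hnonneg 1 T hT', hnonneg 2 T hT', hnonneg 3 T hT', hnonneg 4 T hT',
    hnonneg 5 T hT', hnonneg 6 T hT', hnonneg 7 T hT', hsum T hT'⟩

/-- Positive invariance of Ω = {components ≥ 0, human components sum to 1}
for the controlled dengue model. -/
theorem dengue_positively_invariant
    (B βmh βhm m k μh νh ηh φ ηA μA μm ηm : ℝ)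
    (hB : 0 < B) (hβmh : 0 < βmh) (hβhm : 0 < βhm) (hm : 0 < m) (hk : 0 < k)
    (hμh : 0 < μh) (hνh : 0 < νh) (hηh : 0 < ηh) (hφ : 0 < φ)
    (hηA : 0 < ηA) (hμA : 0 < μA) (hμm : 0 < μm) (hηm : 0 < ηm)
    (c : ℝ → ℝ) (hc_cont : Continuous c) (hc : ∀ t, 0 ≤ t → c t ∈ Set.Icc (0:ℝ) 1)
    (sh eh ih rh am sm em im : ℝ → ℝ)
    (hsh : ∀ t, 0 ≤ t → HasDerivAt sh (μh - (B * βmh * m * im t + μh) * sh t) t)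
    (heh : ∀ t, 0 ≤ t → HasDerivAt eh (B * βmh * m * im t * sh t - (νh + μh) * eh t) t)
    (hih : ∀ t, 0 ≤ t → HasDerivAt ih (νh * eh t - (ηh + μh) * ih t) t)
    (hrh : ∀ t, 0 ≤ t → HasDerivAt rh (ηh * ih t - μh * rh t) t)
    (ham : ∀ t, 0 ≤ t → HasDerivAt am
      (φ * (m / k) * (1 - am t) * (sm t + em t + im t) - (ηA + μA) * am t) t)
    (hsm : ∀ t, 0 ≤ t → HasDerivAt sm
      (ηA * (k / m) * am t - (B * βhm * ih t + μm) * sm t - c t * sm t) t)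
    (hem : ∀ t, 0 ≤ t → HasDerivAt em
      (B * βhm * ih t * sm t - (μm + ηm) * em t - c t * em t) t)
    (him : ∀ t, 0 ≤ t → HasDerivAt im (ηm * em t - μm * im t - c t * im t) t)
    (h0nonneg : 0 ≤ sh 0 ∧ 0 ≤ eh 0 ∧ 0 ≤ ih 0 ∧ 0 ≤ rh 0)
    (h0sum : sh 0 + eh 0 + ih 0 + rh 0 = 1)
    (h0vec : am 0 ∈ Set.Icc (0:ℝ) 1 ∧ sm 0 ∈ Set.Icc (0:ℝ) 1 ∧
             em 0 ∈ Set.Icc (0:ℝ) 1 ∧ im 0 ∈ Set.Icc (0:ℝ) 1) :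
    ∀ t, 0 ≤ t →
      (0 ≤ sh t ∧ 0 ≤ eh t ∧ 0 ≤ ih t ∧ 0 ≤ rh t ∧
       0 ≤ am t ∧ 0 ≤ sm t ∧ 0 ≤ em t ∧ 0 ≤ im t ∧
       sh t + eh t + ih t + rh t = 1) :=
  dengue_positively_invariant_general B βmh βhm m k μh νh ηh φ ηA μA μm ηm hB hβmh hβhm hm hk hμh
    hνh hηh hφ hηA hμA hμm hηm c hc sh eh ih rh am sm em im hsh heh hih hrh ham hsm hem him h0nonneg
    h0sum h0vec
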